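/- Let λ > 0 be a tiling parameter (λ^{−1} an integer ≥ 2) and let ρ be a bounded measurable function on ℝ², identically zero outside the open unit square Q = (−1/2,1/2)², such that ⨍_Q ρ(y)dy = 0 for every tile Q ∈ T_λ. Then the geometric mixing scale satisfies G(ρ) ≤ C₁·λ, where C₁ = C₁(κ) (one may take C₁ = 4√2/κ). -/

import Mathlib

open MeasureTheory Metric Set Filter ENNReal Topology

noncomputable section

/-- Points of the plane. -/
abbrev Pt : Type := EuclideanSpace ℝ (Fin 2)

/-- The open unit square `Q = (−1/2, 1/2)²`. -/
def unitSq : Set Pt :=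
  {x : Pt | x 0 ∈ Set.Ioo (-(1/2) : ℝ) (1/2) ∧ x 1 ∈ Set.Ioo (-(1/2) : ℝ) (1/2)}

/-- `lam` is an admissible tiling parameter: `lam⁻¹` is an integer `≥ 2`. -/
def TilingParam (lam : ℝ) : Prop := ∃ m : ℕ, 2 ≤ m ∧ lam = 1 / (m : ℝ)

/-- The open tile with indices `k, h` in the tiling of the unit square with tiles of side `lam`. -/
def tile (lam : ℝ) (k h : ℕ) : Set Pt :=
  {x : Pt | x 0 ∈ Set.Ioo (-(1/2) + (k : ℝ) * lam) (-(1/2) + ((k : ℝ) + 1) * lam) ∧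
            x 1 ∈ Set.Ioo (-(1/2) + (h : ℝ) * lam) (-(1/2) + ((h : ℝ) + 1) * lam)}

/-- `Q` is a tile of the tiling `T_lam` of the unit square. -/
def IsTile (lam : ℝ) (Q : Set Pt) : Prop :=
  ∃ k h : ℕ, ((k : ℝ) + 1) * lam ≤ 1 ∧ ((h : ℝ) + 1) * lam ≤ 1 ∧ Q = tile lam k h

/-- The center `r_Q` of the tile with indices `k, h` and side `lam`. -/
def tileCenter (lam : ℝ) (k h : ℕ) : Pt :=
  EuclideanSpace.single 0 (-(1/2) + ((k : ℝ) + 1/2) * lam) +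
    EuclideanSpace.single 1 (-(1/2) + ((h : ℝ) + 1/2) * lam)

/-- The `L^∞` norm of a scalar function on the plane. -/
def supNorm (ρ : Pt → ℝ) : ℝ := (eLpNorm ρ ⊤ volume).toReal

/-- Geometric mixing scale with accuracy parameter `κ`: the infimum of all `ε > 0` such that
the average of `ρ` on every ball of radius `ε` is at most `κ‖ρ‖_∞` in absolute value. -/
def geomScale (κ : ℝ) (ρ : Pt → ℝ) : ℝ :=
  sInf {ε : ℝ | 0 < ε ∧ ∀ x : Pt, |⨍ y in ball x ε, ρ y| ≤ κ * supNorm ρ}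

/-- Homogeneous `Ḣ^{-1}(ℝ²)` norm (functional mixing scale), defined by duality. -/
def negNorm (ρ : Pt → ℝ) : ℝ :=
  sSup {v : ℝ | ∃ ξ : Pt → ℝ, ContDiff ℝ (⊤ : ℕ∞) ξ ∧
    (∫ x : Pt, ‖fderiv ℝ ξ x‖ ^ 2) ≤ 1 ∧ v = ∫ x : Pt, ρ x * ξ x}

/-- Characteristic length scale of `A` with respect to `E` (with accuracy `κ` and parameter
`sbar`): the supremum of radii of balls contained in `E` that are filled with `A` in
proportion more than `1 - ((1-κ)/2)·sbar`. -/
def lengthScale (κ sbar : ℝ) (E A : Set Pt) : ℝ :=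
  sSup {r : ℝ | ∃ x : Pt, ball x r ⊆ E ∧
    1 - (1 - κ) / 2 * sbar <
      (volume (A ∩ ball x r)).toReal / (volume (ball x r)).toReal}

/-- A vector field on the plane is divergence free. -/
def DivFree (v : Pt → Pt) : Prop :=
  ∀ x : Pt, (∑ i : Fin 2, fderiv ℝ (fun y => v y i) x (EuclideanSpace.single i 1)) = 0

/-- `X` is the (incompressible, regular Lagrangian) flow map of the velocity field `u`. -/
def IsFlowMap (u : ℝ → Pt → Pt) (X : ℝ → Pt → Pt) : Prop :=
  (∀ x, X 0 x = x) ∧ (∀ x t, HasDerivAt (fun s => X s x) (u t (X t x)) t) ∧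
    (∀ t, MeasurePreserving (X t) volume volume)

/-- `ρ` solves the continuity equation `∂_t ρ + div(uρ) = 0` with divergence-free field `u`,
i.e. `ρ` is transported along the flow of `u`. -/
def TransportedBy (u : ℝ → Pt → Pt) (ρ : ℝ → Pt → ℝ) : Prop :=
  ∃ X, IsFlowMap u X ∧ ∀ t x, ρ t (X t x) = ρ 0 x

/-- Gagliardo-type homogeneous seminorm of fractional order `k + r` with exponent `p`. -/
def gagliardo (k : ℕ) (r : ℝ) (p : ℝ≥0∞) (f : Pt → Pt) : ℝ≥0∞ :=
  eLpNorm (fun z : Pt × Pt =>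
      ‖iteratedFDeriv ℝ k f z.1 - iteratedFDeriv ℝ k f z.2‖ /
        ‖z.1 - z.2‖ ^ (2 / p.toReal + r)) p volume

/-- Homogeneous Sobolev seminorm `Ẇ^{s,p}(ℝ²)` of a vector field: for integer `s` it is the
`L^p` norm of the `s`-th derivative, otherwise the Gagliardo seminorm of order `s`. -/
def sobolevSeminorm (s : ℝ) (p : ℝ≥0∞) (f : Pt → Pt) : ℝ≥0∞ :=
  if (⌊s⌋₊ : ℝ) = s then eLpNorm (fun x => ‖iteratedFDeriv ℝ ⌊s⌋₊ f x‖) p volume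
  else gagliardo ⌊s⌋₊ (s - ⌊s⌋₊) p f

/-- `‖∇ v‖_{L^p(ℝ²)}` as a real number. -/
def gradLp (p : ℝ) (v : Pt → Pt) : ℝ :=
  (eLpNorm (fun x => ‖fderiv ℝ v x‖) (ENNReal.ofReal p) volume).toReal

/-- `‖∇^k v‖_{L^p(ℝ²)}` as a real number. -/
def gradkLp (k : ℕ) (p : ℝ) (v : Pt → Pt) : ℝ :=
  (eLpNorm (fun x => ‖iteratedFDeriv ℝ k v x‖) (ENNReal.ofReal p) volume).toReal

/-- `‖∇^k v‖_{L^p(Q)}` as a real number. -/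
def gradkLpQ (k : ℕ) (p : ℝ) (v : Pt → Pt) : ℝ :=
  (eLpNorm (fun x => ‖iteratedFDeriv ℝ k v x‖) (ENNReal.ofReal p)
    (volume.restrict unitSq)).toReal

/-- Time steps `T_n = ∑_{i=0}^{n-1} τ^i`. -/
def timeStep (τ : ℝ) (n : ℕ) : ℝ := ∑ i ∈ Finset.range n, τ ^ i

/-- Cellular basic building block `(u₀, ρ₀) ∈ B_{λ,a,p,θ,s}`. -/
structure BuildingBlock (κ sbar lam a : ℝ) (p : ℝ≥0∞) (θ s : ℝ)
    (u0 : ℝ → Pt → Pt) (ρ0 : ℝ → Pt → ℝ) : Prop where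
  /-- `u₀ ∈ L^∞_t(Ẇ^{s,p}_x)` on `0 ≤ t ≤ 1` -/
  sobolev_bound : ∃ M : ℝ≥0∞, M ≠ ⊤ ∧ ∀ t ∈ Set.Icc (0:ℝ) 1, sobolevSeminorm s p (u0 t) ≤ M
  /-- `u₀` is divergence free -/
  div_free : ∀ t ∈ Set.Icc (0:ℝ) 1, DivFree (u0 t)
  /-- `u₀ = 0` on `∂Q` and outside `Q` -/
  zero_outside : ∀ t, ∀ x : Pt, x ∉ unitSq → u0 t x = 0
  /-- `ρ₀` solves the continuity equation with velocity field `u₀` -/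
  transport : TransportedBy u0 ρ0
  /-- binary mean-free initial datum: `1` on `A`, constant `c` on `Q ∖ A`,
  with `LS_Q(A) ≥ a` and `|A| = θ` -/
  init : ∃ (A : Set Pt) (c : ℝ), MeasurableSet A ∧ A ⊆ unitSq ∧
      volume A = ENNReal.ofReal θ ∧ a ≤ lengthScale κ sbar unitSq A ∧
      (∀ x ∈ A, ρ0 0 x = 1) ∧ (∀ x ∈ unitSq \ A, ρ0 0 x = c) ∧
      (∀ x : Pt, x ∉ unitSq → ρ0 0 x = 0) ∧ θ * 1 + (1 - θ) * c = 0
  /-- the tracer is equally distributed among all tiles at time `1` -/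
  mixed : ∀ Q : Set Pt, IsTile lam Q → ∫ x in Q, ρ0 1 x = 0

/-- The pair `(u, ρ)` is of `(λ, a, p, θ, s)`-cellular type with time parameter `τ`:
on each time interval `[T_n, T_{n+1})` and each tile of `T_{λ^n}` it is a rescaled
translated basic building block. -/
structure IsCellular (κ sbar lam a : ℝ) (p : ℝ≥0∞) (θ s τ : ℝ)
    (u : ℝ → Pt → Pt) (ρ : ℝ → Pt → ℝ) : Prop where
  transport : TransportedBy u ρ
  patch : ∀ n k h : ℕ, IsTile (lam ^ n) (tile (lam ^ n) k h) →
    ∃ u0 ρ0, BuildingBlock κ sbar lam a p θ s u0 ρ0 ∧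
      ∀ t ∈ Set.Ico (timeStep τ n) (timeStep τ (n + 1)), ∀ x ∈ tile (lam ^ n) k h,
        u t x = (lam ^ n / τ ^ n) •
            u0 ((t - timeStep τ n) / τ ^ n) ((lam ^ n)⁻¹ • (x - tileCenter (lam ^ n) k h)) ∧
        ρ t x = ρ0 ((t - timeStep τ n) / τ ^ n) ((lam ^ n)⁻¹ • (x - tileCenter (lam ^ n) k h))

/-- Minimal cost `M_{λ,a,p}`: the infimum of `∫₀¹ ‖∇u₀(t,·)‖_{L^p} dt` over all cellular
basic building blocks. -/
def minCost (κ sbar lam a p θ s : ℝ) : ℝ :=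
  sInf {v : ℝ | ∃ u0 ρ0, BuildingBlock κ sbar lam a (ENNReal.ofReal p) θ s u0 ρ0 ∧
    v = ∫ t in Set.Icc (0:ℝ) 1, gradLp p (u0 t)}

/-- `u` is a universal mixer: every bounded mean-free initial datum gets mixed. -/
def UniversalMixer (κ : ℝ) (u : ℝ → Pt → Pt) : Prop :=
  ∀ ρ0 : Pt → ℝ, Measurable ρ0 → (∃ M : ℝ, ∀ x, |ρ0 x| ≤ M) → Integrable ρ0 →
    (∫ x : Pt, ρ0 x) = 0 →
    ∀ ρ : ℝ → Pt → ℝ, ρ 0 = ρ0 → TransportedBy u ρ →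
      Tendsto (fun t => geomScale κ (ρ t)) atTop (𝓝 0) ∧
      Tendsto (fun t => negNorm (ρ t)) atTop (𝓝 0)

/-- `a(t)`: the supremum over `x` of the infimum of all radii `r` such that the trajectory
starting at `x` stays in `B(X(t,x), r)` for all times `s ≥ t`. -/
def confRad (X : ℝ → Pt → Pt) (t : ℝ) : ℝ≥0∞ :=
  ⨆ x : Pt, sInf {r : ℝ≥0∞ | ∀ s : ℝ, t ≤ s → edist (X s x) (X t x) < r}

/-! A ball `B = ball x r` with `r ≥ √2 λ` splits, up to the grid lines (a null set), into the
tiles contained in `B`, on which `ρ` has zero integral, the tiles crossing `∂B`, and points outside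
`Q`, where `ρ = 0`. A tile crossing `∂B` has diameter `√2 λ`, so it lies in the annulus
`B ∖ closedBall x (r - √2 λ)` of area at most `2π r √2 λ`. Hence `|⨍_B ρ| ≤ 2√2 λ ‖ρ‖_∞ / r`,
which is `κ ‖ρ‖_∞ / 2` for `r = 4√2 λ / κ`. -/

open Real

theorem ae_norm_le_toReal_eLpNorm_top {α E : Type*} [MeasurableSpace α] {μ : Measure α}
    [NormedAddCommGroup E] {f : α → E} {C : ℝ} (hC : ∀ᵐ x ∂μ, ‖f x‖ ≤ C) :
    ∀ᵐ x ∂μ, ‖f x‖ ≤ (eLpNorm f ∞ μ).toReal := by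
  rw [eLpNorm_exponent_top]
  filter_upwards [ae_le_eLpNormEssSup (f := f) (μ := μ)] with x hx
  simpa using ENNReal.toReal_mono (eLpNormEssSup_lt_top_of_ae_bound hC).ne hx

theorem abs_setIntegral_le_of_ae_eq_zero_off {α : Type*} [MeasurableSpace α] {μ : Measure α}
    {f : α → ℝ} {s N : Set α} {C : ℝ} (hs : NullMeasurableSet s μ) (hN : μ N ≠ ∞) (hC0 : 0 ≤ C)
    (hC : ∀ᵐ x ∂μ, |f x| ≤ C) (hoff : ∀ᵐ x ∂μ, x ∈ s → x ∉ N → f x = 0) :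
    |∫ x in s, f x ∂μ| ≤ C * μ.real N := by
  rw [setIntegral_eq_of_subset_of_ae_sdiff_eq_zero hs inter_subset_left
    (hoff.mono fun x hx hxs => hx hxs.1 fun hxN => hxs.2 ⟨hxs.1, hxN⟩)]
  calc |∫ x in s ∩ N, f x ∂μ| ≤ C * μ.real (s ∩ N) := by
        rw [← Real.norm_eq_abs]; exact norm_setIntegral_le_of_norm_le_const_ae'
          ((measure_mono inter_subset_right).trans_lt hN.lt_top) (hC.mono fun x hx _ => hx)
    _ ≤ C * μ.real N := mul_le_mul_of_nonneg_left (measureReal_mono inter_subset_right hN) hC0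

theorem volume_setOf_coord_mem (s t : Set ℝ) :
    volume {x : Pt | x 0 ∈ s ∧ x 1 ∈ t} = volume s * volume t := by
  have h : {x : Pt | x 0 ∈ s ∧ x 1 ∈ t} =
      (MeasurableEquiv.toLp 2 (Fin 2 → ℝ)).symm ⁻¹' univ.pi ![s, t] := by
    ext x
    simp [Set.mem_pi, Fin.forall_fin_two]
  rw [h, (EuclideanSpace.volume_preserving_symm_measurableEquiv_toLp _).measure_preimage_equiv,
    volume_pi_pi, Fin.prod_univ_two]
  rfl

theorem EuclideanSpace.ae_apply_ne {ι : Type*} [Fintype ι] (i : ι) (c : ℝ) :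
    ∀ᵐ x : EuclideanSpace ℝ ι, x i ≠ c :=
  ((EuclideanSpace.volume_preserving_symm_measurableEquiv_toLp ι).quasiMeasurePreserving.ae
    (Measure.ae_eval_ne (fun _ => volume) i c)).mono fun _ => id

theorem EuclideanSpace.dist_lt_sqrt_card_mul {ι : Type*} [Fintype ι] [Nonempty ι]
    {x y : EuclideanSpace ℝ ι} {l : ℝ} (h : ∀ i, |x i - y i| < l) :
    dist x y < √(Fintype.card ι) * l := by
  have hl : 0 < l := (abs_nonneg _).trans_lt (h (Classical.arbitrary ι))
  rw [EuclideanSpace.dist_eq, ← sqrt_sq hl.le, ← sqrt_mul (Nat.cast_nonneg _)]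
  refine sqrt_lt_sqrt (by positivity) ?_
  calc ∑ i, dist (x i) (y i) ^ 2 < ∑ _i : ι, l ^ 2 :=
        Finset.sum_lt_sum_of_nonempty Finset.univ_nonempty fun i _ => by
          rw [Real.dist_eq]; exact pow_lt_pow_left₀ (h i) (abs_nonneg _) two_ne_zero
    _ = Fintype.card ι * l ^ 2 := by simp

theorem measureReal_ball_sdiff_closedBall_le (x : Pt) {r d : ℝ} (hd : 0 < d) (hdr : d ≤ r) :
    volume.real (ball x r \ closedBall x (r - d)) ≤ 2 * π * r * d := by
  rw [measureReal_def, measure_sdiff (closedBall_subset_ball (by linarith))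
    measurableSet_closedBall.nullMeasurableSet measure_closedBall_lt_top.ne,
    EuclideanSpace.volume_ball_fin_two, EuclideanSpace.volume_closedBall_fin_two,
    ← ENNReal.ofReal_pow (by linarith), ← ENNReal.ofReal_pow (by linarith),
    ← ENNReal.ofReal_mul (by positivity), ← ENNReal.ofReal_mul (by positivity),
    ← ENNReal.ofReal_sub _ (by positivity), ENNReal.toReal_ofReal]
  · nlinarith [mul_nonneg pi_pos.le (sq_nonneg d)]
  · nlinarith [mul_nonneg (mul_nonneg pi_pos.le hd.le) (by linarith : 0 ≤ 2 * r - d)]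

theorem mem_Ioo_floor_div {lam t : ℝ} (hlam : 0 < lam) (ht : 0 ≤ t)
    (hgrid : ∀ j : ℕ, t ≠ j * lam) :
    t ∈ Ioo (⌊t / lam⌋₊ * lam) ((⌊t / lam⌋₊ + 1) * lam) := by
  have hfloor : (⌊t / lam⌋₊ : ℝ) ≤ t / lam := Nat.floor_le (div_nonneg ht hlam.le)
  refine ⟨lt_of_le_of_ne ((le_div_iff₀ hlam).1 hfloor) (hgrid _).symm, ?_⟩
  exact (div_lt_iff₀ hlam).1 (Nat.lt_floor_add_one _)

theorem measurableSet_tile (lam : ℝ) (k h : ℕ) : MeasurableSet (tile lam k h) :=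
  ((measurable_pi_apply 0).comp (WithLp.measurable_ofLp 2 _) measurableSet_Ioo).inter
    ((measurable_pi_apply 1).comp (WithLp.measurable_ofLp 2 _) measurableSet_Ioo)

theorem volume_tile (lam : ℝ) (k h : ℕ) :
    volume (tile lam k h) = ENNReal.ofReal lam * ENNReal.ofReal lam := by
  rw [tile, volume_setOf_coord_mem, Real.volume_Ioo, Real.volume_Ioo]
  ring_nf

theorem volume_unitSq : volume unitSq = 1 := by
  rw [unitSq, volume_setOf_coord_mem, Real.volume_Ioo]
  norm_num

theorem disjoint_tile {lam : ℝ} (hlam : 0 < lam) {k h k' h' : ℕ} (hne : (k, h) ≠ (k', h')) :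
    Disjoint (tile lam k h) (tile lam k' h') := by
  have index_le {a b : ℕ} {u : ℝ} (ha : u ∈ Ioo (-(1/2) + a * lam) (-(1/2) + (a + 1) * lam))
      (hb : u ∈ Ioo (-(1/2) + b * lam) (-(1/2) + (b + 1) * lam)) : a ≤ b := by
    have : (a : ℝ) < b + 1 := lt_of_mul_lt_mul_right (by linarith [ha.1, hb.2]) hlam.le
    exact_mod_cast Nat.lt_succ_iff.1 (by exact_mod_cast this)
  refine Set.disjoint_left.2 fun y hy hy' => hne ?_
  rw [(index_le hy.1 hy'.1).antisymm (index_le hy'.1 hy.1),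
    (index_le hy.2 hy'.2).antisymm (index_le hy'.2 hy.2)]

theorem tile_subset_ball {lam : ℝ} {k h : ℕ} {y : Pt} (hy : y ∈ tile lam k h) :
    tile lam k h ⊆ ball y (√2 * lam) := by
  intro z hz
  have hcoord : ∀ i, |z i - y i| < lam := by
    simp only [Fin.forall_fin_two, abs_sub_lt_iff]
    refine ⟨⟨?_, ?_⟩, ?_, ?_⟩ <;>
      linarith [hz.1.1, hz.1.2, hz.2.1, hz.2.2, hy.1.1, hy.1.2, hy.2.1, hy.2.2]
  simpa using EuclideanSpace.dist_lt_sqrt_card_mul hcoord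

theorem exists_index_mem_Ioo {m : ℕ} {lam u : ℝ} (hlam : lam = 1 / m) (hm : 0 < m)
    (hu : u ∈ Ioo (-(1/2) : ℝ) (1/2)) (hgrid : ∀ j : ℕ, u ≠ -(1/2) + j * lam) :
    ∃ k < m, u ∈ Ioo (-(1/2) + k * lam) (-(1/2) + (k + 1) * lam) := by
  have hlam0 : 0 < lam := by rw [hlam]; positivity
  have hmem := mem_Ioo_floor_div hlam0 (t := u + 1/2) (by linarith [hu.1])
    fun j hj => hgrid j (by linarith)
  refine ⟨⌊(u + 1/2) / lam⌋₊, ?_, by linarith [hmem.1], by linarith [hmem.2]⟩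
  have : (⌊(u + 1/2) / lam⌋₊ : ℝ) * lam < m * lam := by
    have hmlam : (m : ℝ) * lam = 1 := by rw [hlam, mul_one_div_cancel (by positivity)]
    linarith [hmem.1, hu.2]
  exact_mod_cast lt_of_mul_lt_mul_right this hlam0.le

theorem ae_exists_tile_of_mem_unitSq {m : ℕ} {lam : ℝ} (hlam : lam = 1 / m) (hm : 0 < m) :
    ∀ᵐ y : Pt, y ∈ unitSq → ∃ k < m, ∃ h < m, y ∈ tile lam k h := by
  have hgrid : ∀ᵐ y : Pt, ∀ i, ∀ j : ℕ, y i ≠ -(1/2) + j * lam :=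
    ae_all_iff.2 fun i => ae_all_iff.2 fun j => EuclideanSpace.ae_apply_ne i _
  filter_upwards [hgrid] with y hy hyQ
  obtain ⟨k, hk, hyk⟩ := exists_index_mem_Ioo hlam hm hyQ.1 (hy 0)
  obtain ⟨h, hh, hyh⟩ := exists_index_mem_Ioo hlam hm hyQ.2 (hy 1)
  exact ⟨k, hk, h, hh, hyk, hyh⟩

theorem isTile_tile {m k h : ℕ} {lam : ℝ} (hlam : lam = 1 / m) (hk : k < m) (hh : h < m) :
    IsTile lam (tile lam k h) := by
  have index_le {a : ℕ} (ha : a < m) : ((a : ℝ) + 1) * lam ≤ 1 := by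
    rw [hlam, mul_one_div, div_le_one (by exact_mod_cast (Nat.zero_le a).trans_lt ha)]
    exact_mod_cast ha
  exact ⟨k, h, index_le hk, index_le hh, rfl⟩

section BallAverage

variable {m : ℕ} {lam C : ℝ} {ρ : Pt → ℝ}

theorem abs_setIntegral_ball_le (hlam : lam = 1 / m) (hm : 0 < m) (hρ : Integrable ρ)
    (hC0 : 0 ≤ C) (hC : ∀ᵐ y, |ρ y| ≤ C) (hzero : ∀ y, y ∉ unitSq → ρ y = 0)
    (hmean : ∀ k < m, ∀ h < m, ∫ y in tile lam k h, ρ y = 0) (x : Pt) {r : ℝ}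
    (hr : √2 * lam ≤ r) :
    |∫ y in ball x r, ρ y| ≤ C * (2 * π * r * (√2 * lam)) := by
  classical
  have hlam0 : 0 < lam := by rw [hlam]; positivity
  set d := √2 * lam
  set F := (Finset.range m ×ˢ Finset.range m).filter fun p => tile lam p.1 p.2 ⊆ ball x r
  set S := ⋃ p ∈ F, tile lam p.1 p.2
  have hS : MeasurableSet S := F.measurableSet_biUnion fun p _ => measurableSet_tile lam p.1 p.2
  have hS0 : ∫ y in S, ρ y = 0 := by
    rw [integral_biUnion_finset F (fun p _ => measurableSet_tile lam p.1 p.2)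
      (fun p _ q _ hpq => disjoint_tile hlam0 hpq) fun p _ => hρ.integrableOn]
    refine Finset.sum_eq_zero fun p hp => ?_
    simp only [F, Finset.mem_filter, Finset.mem_product, Finset.mem_range] at hp
    exact hmean _ hp.1.1 _ hp.1.2
  have hSB : S ⊆ ball x r := iUnion₂_subset fun p hp => (Finset.mem_filter.1 hp).2
  -- A point of `Q` off the grid lines that is at distance `≤ r - d` from `x` lies in a tile of
  -- diameter `d` that is contained in the ball, hence in `S`.
  have hoff : ∀ᵐ y, y ∈ ball x r \ S → y ∉ ball x r \ closedBall x (r - d) → ρ y = 0 := by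
    filter_upwards [ae_exists_tile_of_mem_unitSq hlam hm] with y hy ⟨hyB, hyS⟩ hyN
    by_contra hρy
    obtain ⟨k, hk, h, hh, hyT⟩ := hy (by_contra fun hyQ => hρy (hzero y hyQ))
    have hyx : d + dist y x ≤ r := by
      have := mem_closedBall.1 (not_and_not_right.1 hyN hyB); linarith
    refine hyS (mem_iUnion₂.2 ⟨(k, h), Finset.mem_filter.2 ⟨?_, ?_⟩, hyT⟩)
    · exact Finset.mem_product.2 ⟨Finset.mem_range.2 hk, Finset.mem_range.2 hh⟩
    · exact (tile_subset_ball hyT).trans (ball_subset_ball' hyx)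
  calc |∫ y in ball x r, ρ y| = |∫ y in ball x r \ S, ρ y| := by
        rw [setIntegral_sdiff hS hρ.integrableOn hSB, hS0, sub_zero]
    _ ≤ C * volume.real (ball x r \ closedBall x (r - d)) :=
        abs_setIntegral_le_of_ae_eq_zero_off (measurableSet_ball.diff hS).nullMeasurableSet
          ((measure_mono sdiff_subset).trans_lt measure_ball_lt_top).ne hC0 hC hoff
    _ ≤ C * (2 * π * r * d) := by
        gcongr; exact measureReal_ball_sdiff_closedBall_le x (by positivity) hr

theorem abs_setAverage_ball_le (hlam : lam = 1 / m) (hm : 0 < m) (hρ : Integrable ρ)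
    (hC0 : 0 ≤ C) (hC : ∀ᵐ y, |ρ y| ≤ C) (hzero : ∀ y, y ∉ unitSq → ρ y = 0)
    (hmean : ∀ k < m, ∀ h < m, ∫ y in tile lam k h, ρ y = 0) (x : Pt) {r : ℝ}
    (hr : √2 * lam ≤ r) :
    |⨍ y in ball x r, ρ y| ≤ 2 * √2 * lam / r * C := by
  have hr0 : 0 < r := lt_of_lt_of_le (by rw [hlam]; positivity) hr
  have hvol : volume.real (ball x r) = π * r ^ 2 := by
    rw [measureReal_def, EuclideanSpace.volume_ball_fin_two, ENNReal.toReal_mul,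
      ENNReal.toReal_pow, ENNReal.toReal_ofReal hr0.le, ENNReal.toReal_ofReal pi_pos.le, mul_comm]
  rw [setAverage_eq, hvol, smul_eq_mul, abs_mul, abs_inv, abs_of_pos (by positivity)]
  calc (π * r ^ 2)⁻¹ * |∫ y in ball x r, ρ y|
      ≤ (π * r ^ 2)⁻¹ * (C * (2 * π * r * (√2 * lam))) := by
        gcongr; exact abs_setIntegral_ball_le hlam hm hρ hC0 hC hzero hmean x hr
    _ = 2 * √2 * lam / r * C := by field_simp

end BallAverage

/-- **Lemma (geometric part).** If a bounded function `ρ`, vanishing outside the unit square,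
has zero average on every tile of `T_λ`, then `G(ρ) ≤ C₁ λ` with `C₁ = 4√2/κ`. -/
theorem geom_scale_of_tiling (κ : ℝ) (hκ : κ ∈ Set.Ioo (0:ℝ) 1)
    (lam : ℝ) (hlam : TilingParam lam) (ρ : Pt → ℝ)
    (hmeas : Measurable ρ) (hbdd : ∃ M : ℝ, ∀ x : Pt, |ρ x| ≤ M)
    (hzero : ∀ x : Pt, x ∉ unitSq → ρ x = 0)
    (hmean : ∀ Q : Set Pt, IsTile lam Q → (⨍ y in Q, ρ y) = 0) :
    geomScale κ ρ ≤ (4 * Real.sqrt 2 / κ) * lam := by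
  obtain ⟨m, hm2, hlam⟩ := hlam
  have hm : 0 < m := by omega
  have hlam0 : 0 < lam := by rw [hlam]; positivity
  obtain ⟨M, hM⟩ := hbdd
  have hC : ∀ᵐ y, |ρ y| ≤ supNorm ρ := ae_norm_le_toReal_eLpNorm_top (f := ρ) (ae_of_all _ hM)
  have hρ : Integrable ρ :=
    (Measure.integrableOn_of_bounded (by simp [volume_unitSq]) hmeas.aestronglyMeasurable
      (ae_of_all _ hM)).integrable_of_forall_notMem_eq_zero hzero
  have htile : ∀ k < m, ∀ h < m, ∫ y in tile lam k h, ρ y = 0 := fun k hk h hh => by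
    rw [← measure_smul_setAverage _ (by rw [volume_tile]; finiteness),
      hmean _ (isTile_tile hlam hk hh), smul_zero]
  obtain ⟨hκ0, hκ1⟩ := hκ
  have hε : √2 * lam ≤ 4 * √2 / κ * lam := by
    rw [div_mul_eq_mul_div, le_div_iff₀ hκ0]
    nlinarith [mul_pos (sqrt_pos.2 two_pos) hlam0]
  refine csInf_le ⟨0, fun _ h => h.1.le⟩ ⟨by positivity, fun x => ?_⟩
  calc |⨍ y in ball x (4 * √2 / κ * lam), ρ y|
      ≤ 2 * √2 * lam / (4 * √2 / κ * lam) * supNorm ρ :=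
        abs_setAverage_ball_le hlam hm hρ ENNReal.toReal_nonneg hC hzero htile x hε
    _ = κ / 2 * supNorm ρ := by field_simp; ring
    _ ≤ κ * supNorm ρ := by gcongr; exacts [ENNReal.toReal_nonneg, half_le_self hκ0.le]
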